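/- arXiv:1510.00059 — 2 statements merged into one kernel-verified Lean document; each statement's English description precedes it below -/
import Mathlib

section
/- Let p : ℝ → [0, ∞) be a continuous probability density symmetric around zero, let γ > 0 and c₁, c₂ ≥ 0, and for 0 < β₁ < β₂ with Q(β₁, β₂) := ∫_{β₁}^{β₂} p(x) dx > 0 define μ(β₁, β₂) = (∫_{β₁}^{β₂} x p(x) dx)/Q(β₁, β₂) and the expected total cost J(β₁, β₂) = 2∫₀^{β₁} x² p(x) dx + 2c₁·Q(β₁, β₂) + (2/(γ+1))·(∫_{β₁}^{β₂} x² p(x) dx − (∫_{β₁}^{β₂} x p(x) dx)²/Q(β₁, β₂)) + 2c₂·∫_{β₂}^{∞} p(x) dx. Then J is differentiable in β₁ and β₂ with ∂J/∂β₁ = 2p(β₁)·(β₁² − c₁ − (1/(γ+1))·(β₁ − μ(β₁, β₂))²) and ∂J/∂β₂ = 2p(β₂)·(c₁ − c₂ + (1/(γ+1))·(β₂ − μ(β₁, β₂))²). In particular, any interior stationary point (β₁, β₂) with p(β₁) > 0 and p(β₂) > 0 satisfies β₁² − (1/(γ+1))·(β₁ − μ)² = c₁ and (1/(γ+1))·(β₂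 − μ)² = c₂ − c₁, where μ = μ(β₁, β₂). -/
open MeasureTheory intervalIntegral

/-- Probability that the source lies in `(β₁, β₂)` (one-sided): `∫_{β₁}^{β₂} p`. -/
noncomputable def thresholdProb (p : ℝ → ℝ) (β₁ β₂ : ℝ) : ℝ := ∫ x in β₁..β₂, p x

/-- Conditional mean `μ(β₁,β₂) = (∫_{β₁}^{β₂} x p)/ (∫_{β₁}^{β₂} p)`. -/
noncomputable def condMean (p : ℝ → ℝ) (β₁ β₂ : ℝ) : ℝ :=
  (∫ x in β₁..β₂, x * p x) / thresholdProb p β₁ β₂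

/-- Expected total cost of the threshold-in-threshold policy with thresholds `β₁ ≤ β₂`. -/
noncomputable def totalCost (p : ℝ → ℝ) (γ c₁ c₂ β₁ β₂ : ℝ) : ℝ :=
  2 * (∫ x in (0:ℝ)..β₁, x^2 * p x)
  + 2 * c₁ * thresholdProb p β₁ β₂
  + (2/(γ+1)) * ((∫ x in β₁..β₂, x^2 * p x)
      - (∫ x in β₁..β₂, x * p x)^2 / thresholdProb p β₁ β₂)
  + 2 * c₂ * ∫ x in Set.Ioi β₂, p x

theorem Continuous.hasDerivAt_intervalIntegral_left {f : ℝ → ℝ} (hf : Continuous f)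
    (a b : ℝ) :
    HasDerivAt (fun t => ∫ x in t..b, f x) (-f a) a :=
  integral_hasDerivAt_left (hf.intervalIntegrable _ _) (hf.stronglyMeasurableAtFilter _ _)
    hf.continuousAt

theorem hasDerivAt_integral_Ioi {f : ℝ → ℝ} {b : ℝ} (hf : Integrable f)
    (hb : ContinuousAt f b) :
    HasDerivAt (fun t => ∫ x in Set.Ioi t, f x) (-f b) b := by
  have htail : (fun t => ∫ x in Set.Ioi t, f x) =
      fun t => (∫ x in Set.Ioi b, f x) - ∫ x in b..t, f x := by
    funext t
    rw [← integral_Ioi_sub_Ioi' hf.integrableOn hf.integrableOn, sub_sub_cancel]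
  rw [htail, ← zero_sub]
  exact (hasDerivAt_const b _).sub <| integral_hasDerivAt_right hf.intervalIntegrable
    hf.aestronglyMeasurable.stronglyMeasurableAtFilter hb

/-- If `S`, `M`, `Q` are the second moment, first moment and mass of a weight on a moving
interval, then `S - M² / Q` (mass times conditional variance) moves at the rate
`w (x - M / Q)²`, where `w` is the rate of the mass and `x` the moving endpoint. -/
theorem HasDerivAt.sub_sq_div {S M Q : ℝ → ℝ} {w x t : ℝ} (hS : HasDerivAt S (x ^ 2 * w) t)
    (hM : HasDerivAt M (x * w) t) (hQ : HasDerivAt Q w t) (hQt : Q t ≠ 0) :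
    HasDerivAt (fun s => S s - M s ^ 2 / Q s) (w * (x - M t / Q t) ^ 2) t := by
  refine (hS.fun_sub ((hM.fun_pow 2).fun_div hQ hQt)).congr_deriv ?_
  field_simp
  ring

section

variable {p : ℝ → ℝ} {a b : ℝ}

theorem hasDerivAt_truncCentralMoment_left (hp : Continuous p) (hQ : thresholdProb p a b ≠ 0) :
    HasDerivAt
      (fun t => (∫ x in t..b, x ^ 2 * p x) - (∫ x in t..b, x * p x) ^ 2 / thresholdProb p t b)
      (-p a * (a - condMean p a b) ^ 2) a := by
  have hS := ((continuous_pow 2).mul hp).hasDerivAt_intervalIntegral_left a b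
  have hM := (continuous_id.mul hp).hasDerivAt_intervalIntegral_left a b
  exact HasDerivAt.sub_sq_div (by simpa using hS) (by simpa using hM)
    (hp.hasDerivAt_intervalIntegral_left a b) hQ

theorem hasDerivAt_truncCentralMoment_right (hp : Continuous p) (hQ : thresholdProb p a b ≠ 0) :
    HasDerivAt
      (fun t => (∫ x in a..t, x ^ 2 * p x) - (∫ x in a..t, x * p x) ^ 2 / thresholdProb p a t)
      (p b * (b - condMean p a b) ^ 2) b :=
  HasDerivAt.sub_sq_div (((continuous_pow 2).mul hp).integral_hasStrictDerivAt a b).hasDerivAt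
    ((continuous_id.mul hp).integral_hasStrictDerivAt a b).hasDerivAt
    (hp.integral_hasStrictDerivAt a b).hasDerivAt hQ

variable (γ c₁ c₂ : ℝ)

theorem hasDerivAt_totalCost_left (hp : Continuous p) (hQ : thresholdProb p a b ≠ 0) :
    HasDerivAt (fun t => totalCost p γ c₁ c₂ t b)
      (2 * p a * (a ^ 2 - c₁ - (1 / (γ + 1)) * (a - condMean p a b) ^ 2)) a := by
  have hS : HasDerivAt (fun t => ∫ x in (0 : ℝ)..t, x ^ 2 * p x) (a ^ 2 * p a) a :=
    (((continuous_pow 2).mul hp).integral_hasStrictDerivAt 0 a).hasDerivAt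
  have hQ' := hp.hasDerivAt_intervalIntegral_left a b
  have hV := hasDerivAt_truncCentralMoment_left hp hQ
  refine ((((hS.const_mul 2).fun_add (hQ'.const_mul (2 * c₁))).fun_add
    (hV.const_mul (2 / (γ + 1)))).add_const _).congr_deriv ?_
  ring

theorem hasDerivAt_totalCost_right (hp : Continuous p) (hint : Integrable p)
    (hQ : thresholdProb p a b ≠ 0) :
    HasDerivAt (fun t => totalCost p γ c₁ c₂ a t)
      (2 * p b * (c₁ - c₂ + (1 / (γ + 1)) * (b - condMean p a b) ^ 2)) b := by
  have hQ' := (hp.integral_hasStrictDerivAt a b).hasDerivAt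
  have hV := hasDerivAt_truncCentralMoment_right hp hQ
  have hT := hasDerivAt_integral_Ioi hint (hp.continuousAt (x := b))
  refine ((((hQ'.const_mul (2 * c₁)).const_add _).fun_add (hV.const_mul (2 / (γ + 1)))).fun_add
    (hT.const_mul (2 * c₂))).congr_deriv ?_
  ring

end

theorem stmt_9_general (p : ℝ → ℝ) (hp : Continuous p) (hint : Integrable p)
    (γ c₁ c₂ : ℝ)
    (β₁ β₂ : ℝ) (hQ : 0 < thresholdProb p β₁ β₂) :
    HasDerivAt (fun t : ℝ => totalCost p γ c₁ c₂ t β₂)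
      (2 * p β₁ * (β₁^2 - c₁ - (1/(γ+1)) * (β₁ - condMean p β₁ β₂)^2)) β₁ ∧
    HasDerivAt (fun t : ℝ => totalCost p γ c₁ c₂ β₁ t)
      (2 * p β₂ * (c₁ - c₂ + (1/(γ+1)) * (β₂ - condMean p β₁ β₂)^2)) β₂ ∧
    (HasDerivAt (fun t : ℝ => totalCost p γ c₁ c₂ t β₂) 0 β₁ →
     HasDerivAt (fun t : ℝ => totalCost p γ c₁ c₂ β₁ t) 0 β₂ →
     0 < p β₁ → 0 < p β₂ →
      (β₁^2 - (1/(γ+1)) * (β₁ - condMean p β₁ β₂)^2 = c₁ ∧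
       (1/(γ+1)) * (β₂ - condMean p β₁ β₂)^2 = c₂ - c₁)) := by
  have H₁ := hasDerivAt_totalCost_left γ c₁ c₂ hp hQ.ne'
  have H₂ := hasDerivAt_totalCost_right γ c₁ c₂ hp hint hQ.ne'
  refine ⟨H₁, H₂, fun hz₁ hz₂ hp₁ hp₂ => ?_⟩
  have e₁ := (mul_eq_zero.1 (H₁.unique hz₁)).resolve_left (by positivity)
  have e₂ := (mul_eq_zero.1 (H₂.unique hz₂)).resolve_left (by positivity)
  constructor <;> linarith

theorem stmt_9 (p : ℝ → ℝ) (hp : Continuous p) (hpos : ∀ x, 0 ≤ p x)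
    (hsymm : ∀ x, p (-x) = p x) (hint : Integrable p) (hdens : ∫ x, p x = 1)
    (γ c₁ c₂ : ℝ) (hγ : 0 < γ) (hc₁ : 0 ≤ c₁) (hc₂ : 0 ≤ c₂)
    (β₁ β₂ : ℝ) (h1 : 0 < β₁) (h2 : β₁ < β₂) (hQ : 0 < thresholdProb p β₁ β₂) :
    HasDerivAt (fun t : ℝ => totalCost p γ c₁ c₂ t β₂)
      (2 * p β₁ * (β₁^2 - c₁ - (1/(γ+1)) * (β₁ - condMean p β₁ β₂)^2)) β₁ ∧
    HasDerivAt (fun t : ℝ => totalCost p γ c₁ c₂ β₁ t)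
      (2 * p β₂ * (c₁ - c₂ + (1/(γ+1)) * (β₂ - condMean p β₁ β₂)^2)) β₂ ∧
    (HasDerivAt (fun t : ℝ => totalCost p γ c₁ c₂ t β₂) 0 β₁ →
     HasDerivAt (fun t : ℝ => totalCost p γ c₁ c₂ β₁ t) 0 β₂ →
     0 < p β₁ → 0 < p β₂ →
      (β₁^2 - (1/(γ+1)) * (β₁ - condMean p β₁ β₂)^2 = c₁ ∧
       (1/(γ+1)) * (β₂ - condMean p β₁ β₂)^2 = c₂ - c₁)) :=
  stmt_9_general p hp hint γ c₁ c₂ β₁ β₂ hQ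
end

section
/- Let L > 0, γ > 0, c₁ ≥ 0, c₂ ≥ 0, and let X be uniformly distributed on [−L, L]. For a partition of [−L, L] into Borel sets T₀, T₁, T₂ with P(X ∈ T₀) > 0 and P(X ∈ T₁) > 0 and with ∫_{T₀} x·(1/(2L)) dx = 0, define the expected total cost J(T₀, T₁, T₂) = Var(X | X ∈ T₀)·P(X ∈ T₀) + c₁·P(X ∈ T₁) + (1/(γ+1))·Var(X | X ∈ T₁)·P(X ∈ T₁) + c₂·P(X ∈ T₂). Let 0 < β₁ < β₂ with 2β₂ − β₁ ≤ L. For the threshold-in-threshold policy f* take T₀* = [−β₁, β₁], T₁* = [−β₂, −β₁) ∪ (β₁, β₂], T₂* = [−L, −β₂) ∪ (β₂, L], and for the modified policy f′ take T₀′ = [−β₁, β₁], T₁′ = (β₁, 2β₂ − β₁], T₂′ = [−L, −β₁) ∪ (2β₂ − β₁, L]. Then J(T₀′, T₁′, T₂′) < J(T₀*, T₁*, T₂*). -/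
/-!
Both policies share the no-transmission region, and their noisy and perfect regions have the
same probabilities, so the two costs differ only in the mean squared error term of the noisy
channel. Conditioned on an interval of length `ℓ` the uniform source has variance `ℓ² / 12`,
while on the symmetric set `[-β₂, -β₁) ∪ (β₁, β₂]` it has mean zero and variance
`(β₁² + β₁β₂ + β₂²) / 3`. With `ℓ = 2(β₂ - β₁)` the second variance exceeds the first by
`β₁β₂ > 0`.
-/

open MeasureTheory ProbabilityTheory

/-- Expected total cost of a scheduling policy with no-transmission region `T₀`,
noisy-transmission region `T₁` and perfect-transmission region `T₂`, for a source with
distribution `μ`, signal-to-noise ratio `γ` and communication costs `c₁`, `c₂`. -/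
noncomputable def schedCost (μ : Measure ℝ) (γ c₁ c₂ : ℝ) (T₀ T₁ T₂ : Set ℝ) : ℝ :=
  variance id (μ[|T₀]) * (μ T₀).toReal
  + c₁ * (μ T₁).toReal
  + (1/(γ+1)) * variance id (μ[|T₁]) * (μ T₁).toReal
  + c₂ * (μ T₂).toReal

open Set

section Conditioning

variable {α : Type*} [MeasurableSpace α] {μ : Measure α} {S T : Set α}

lemma measureReal_smul_restrict_of_subset (c : ENNReal) (hT : MeasurableSet T) (hTS : T ⊆ S) :
    (c • μ.restrict S).real T = c.toReal * μ.real T := by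
  rw [measureReal_ennreal_smul_apply, measureReal_restrict_apply hT, inter_eq_left.mpr hTS]

lemma cond_smul_restrict_of_subset {c : ENNReal} (hc₀ : c ≠ 0) (hc : c ≠ ⊤)
    (hT : MeasurableSet T) (hTS : T ⊆ S) :
    (c • μ.restrict S)[|T] = μ[|T] := by
  simp only [ProbabilityTheory.cond, Measure.smul_apply, Measure.restrict_apply hT,
    inter_eq_left.mpr hTS, Measure.restrict_smul, Measure.restrict_restrict hT, smul_smul,
    smul_eq_mul]
  rw [ENNReal.mul_inv (Or.inl hc₀) (Or.inl hc), mul_right_comm, ENNReal.inv_mul_cancel hc₀ hc,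
    one_mul]

lemma integral_cond (μ : Measure α) (T : Set α) (f : α → ℝ) :
    ∫ x, f x ∂μ[|T] = (∫ x in T, f x ∂μ) / μ.real T := by
  rw [ProbabilityTheory.cond, integral_smul_measure, ENNReal.toReal_inv, smul_eq_mul,
    inv_mul_eq_div, measureReal_def]

end Conditioning

lemma variance_id_cond_volume {T : Set ℝ} (hT : MeasurableSet T) (hbdd : Bornology.IsBounded T)
    (h₀ : volume T ≠ 0) :
    variance id (volume[|T])
      = (∫ x in T, x ^ 2) / volume.real T - ((∫ x in T, x) / volume.real T) ^ 2 := by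
  have := cond_isProbabilityMeasure_of_finite h₀ hbdd.measure_lt_top.ne
  obtain ⟨C, hC⟩ := isBounded_iff_forall_norm_le.mp hbdd
  have hX : MemLp (id : ℝ → ℝ) 2 (volume[|T]) :=
    MemLp.of_bound measurable_id.aestronglyMeasurable C
      ((ae_cond_mem hT).mono fun x hx => hC x hx)
  rw [variance_eq_sub hX, integral_cond, integral_cond]
  rfl

lemma disjoint_Ico_Ioc_of_le {α : Type*} [Preorder α] {a b c d : α} (hbc : b ≤ c) : Disjoint (Ico a b) (Ioc c d) :=
  disjoint_left.mpr fun _ hx hx' => lt_asymm (hx.2.trans_le hbc) hx'.1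

lemma Ico_union_Ioc_subset_Icc {α : Type*} [Preorder α] {a b c d : α} (hbd : b ≤ d) (hac : a ≤ c) :
    Ico a b ∪ Ioc c d ⊆ Icc a d :=
  union_subset (Ico_subset_Icc_self.trans (Icc_subset_Icc le_rfl hbd))
    (Ioc_subset_Icc_self.trans (Icc_subset_Icc hac le_rfl))

lemma volume_real_Ico_union_Ioc {a b c d : ℝ} (hab : a ≤ b) (hbc : b ≤ c) (hcd : c ≤ d) :
    volume.real (Ico a b ∪ Ioc c d) = (b - a) + (d - c) := by
  rw [measureReal_union (disjoint_Ico_Ioc_of_le hbc) measurableSet_Ioc measure_Ico_lt_top.ne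
    measure_Ioc_lt_top.ne, Real.volume_real_Ico_of_le hab,
    Real.volume_real_Ioc_of_le hcd]

lemma setIntegral_Ico_union_Ioc {f : ℝ → ℝ} (hf : Continuous f) {a b c d : ℝ}
    (hab : a ≤ b) (hbc : b ≤ c) (hcd : c ≤ d) :
    ∫ x in Ico a b ∪ Ioc c d, f x = (∫ x in a..b, f x) + ∫ x in c..d, f x := by
  rw [setIntegral_union (disjoint_Ico_Ioc_of_le hbc) measurableSet_Ioc
    (hf.integrableOn_Icc.mono_set Ico_subset_Icc_self) hf.integrableOn_Ioc,
    integral_Ico_eq_integral_Ioc, intervalIntegral.integral_of_le hab,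
    intervalIntegral.integral_of_le hcd]

lemma variance_cond_volume_Ioc {a b : ℝ} (hab : a < b) :
    variance id (volume[|Ioc a b]) = (b - a) ^ 2 / 12 := by
  rw [variance_id_cond_volume measurableSet_Ioc (Metric.isBounded_Ioc _ _) (by simpa using hab),
    Real.volume_real_Ioc_of_le hab.le, ← intervalIntegral.integral_of_le hab.le,
    ← intervalIntegral.integral_of_le hab.le, integral_pow, integral_id]
  have : b - a ≠ 0 := sub_ne_zero.mpr hab.ne'
  field_simp
  ring

lemma variance_cond_volume_Ico_neg_union_Ioc {a b : ℝ} (ha : 0 ≤ a) (hab : a < b) :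
    variance id (volume[|Ico (-b) (-a) ∪ Ioc a b]) = (a ^ 2 + a * b + b ^ 2) / 3 := by
  have hvol : volume.real (Ico (-b) (-a) ∪ Ioc a b) = 2 * (b - a) := by
    rw [volume_real_Ico_union_Ioc (neg_le_neg hab.le) (by linarith) hab.le]
    ring
  rw [variance_id_cond_volume (measurableSet_Ico.union measurableSet_Ioc)
      ((Metric.isBounded_Ico _ _).union (Metric.isBounded_Ioc _ _))
      ((measure_mono subset_union_right).trans_lt' (by simpa using hab)).ne',
    hvol, setIntegral_Ico_union_Ioc (continuous_pow 2) (neg_le_neg hab.le) (by linarith) hab.le,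
    setIntegral_Ico_union_Ioc continuous_id' (neg_le_neg hab.le) (by linarith) hab.le,
    integral_pow, integral_pow, integral_id, integral_id]
  have : b - a ≠ 0 := sub_ne_zero.mpr hab.ne'
  field_simp
  ring

lemma schedCost_lt_of_variance_lt {μ : Measure ℝ} {γ c₁ c₂ : ℝ} {T₀ T₁ T₂ T₁' T₂' : Set ℝ}
    (hγ : -1 < γ) (h₁ : μ.real T₁' = μ.real T₁) (h₂ : μ.real T₂' = μ.real T₂)
    (hpos : 0 < μ.real T₁) (hvar : variance id (μ[|T₁']) < variance id (μ[|T₁])) :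
    schedCost μ γ c₁ c₂ T₀ T₁' T₂' < schedCost μ γ c₁ c₂ T₀ T₁ T₂ := by
  simp only [schedCost, ← measureReal_def, h₁, h₂]
  have : 0 < 1 / (γ + 1) := by rw [one_div_pos]; linarith
  gcongr

theorem stmt_13_general (L γ c₁ c₂ β₁ β₂ : ℝ) (hL : 0 < L) (hγ : 0 < γ)
    (h1 : 0 < β₁) (h2 : β₁ < β₂) (h3 : 2*β₂ - β₁ ≤ L) :
    schedCost ((ENNReal.ofReal (2*L))⁻¹ • volume.restrict (Set.Icc (-L) L)) γ c₁ c₂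
        (Set.Icc (-β₁) β₁)
        (Set.Ioc β₁ (2*β₂ - β₁))
        (Set.Ico (-L) (-β₁) ∪ Set.Ioc (2*β₂ - β₁) L)
      <
    schedCost ((ENNReal.ofReal (2*L))⁻¹ • volume.restrict (Set.Icc (-L) L)) γ c₁ c₂
        (Set.Icc (-β₁) β₁)
        (Set.Ico (-β₂) (-β₁) ∪ Set.Ioc β₁ β₂)
        (Set.Ico (-L) (-β₂) ∪ Set.Ioc β₂ L) := by
  set κ := (ENNReal.ofReal (2*L))⁻¹
  have hκ₀ : κ ≠ 0 := ENNReal.inv_ne_zero.mpr ENNReal.ofReal_ne_top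
  have hκ : κ ≠ ⊤ := ENNReal.inv_ne_top.mpr (by simpa using hL)
  have hT₁' : Ioc β₁ (2*β₂ - β₁) ⊆ Icc (-L) L :=
    Ioc_subset_Icc_self.trans (Icc_subset_Icc (by linarith) h3)
  have hT₁ : Ico (-β₂) (-β₁) ∪ Ioc β₁ β₂ ⊆ Icc (-L) L :=
    (Ico_union_Ioc_subset_Icc (by linarith) (by linarith)).trans
      (Icc_subset_Icc (by linarith) (by linarith))
  have hT₂' : Ico (-L) (-β₁) ∪ Ioc (2*β₂ - β₁) L ⊆ Icc (-L) L :=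
    Ico_union_Ioc_subset_Icc (by linarith) (by linarith)
  have hT₂ : Ico (-L) (-β₂) ∪ Ioc β₂ L ⊆ Icc (-L) L :=
    Ico_union_Ioc_subset_Icc (by linarith) (by linarith)
  have hm {a b c d : ℝ} : MeasurableSet (Ico a b ∪ Ioc c d) :=
    measurableSet_Ico.union measurableSet_Ioc
  apply schedCost_lt_of_variance_lt (by linarith)
  · rw [measureReal_smul_restrict_of_subset κ measurableSet_Ioc hT₁',
      measureReal_smul_restrict_of_subset κ hm hT₁, Real.volume_real_Ioc_of_le (by linarith),
      volume_real_Ico_union_Ioc (by linarith) (by linarith) h2.le]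
    ring
  · rw [measureReal_smul_restrict_of_subset κ hm hT₂', measureReal_smul_restrict_of_subset κ hm hT₂,
      volume_real_Ico_union_Ioc (by linarith) (by linarith) h3,
      volume_real_Ico_union_Ioc (by linarith) (by linarith) (by linarith)]
    ring
  · rw [measureReal_smul_restrict_of_subset κ hm hT₁,
      volume_real_Ico_union_Ioc (by linarith) (by linarith) h2.le]
    exact mul_pos (ENNReal.toReal_pos hκ₀ hκ) (by linarith)
  · rw [cond_smul_restrict_of_subset hκ₀ hκ measurableSet_Ioc hT₁',
      cond_smul_restrict_of_subset hκ₀ hκ hm hT₁, variance_cond_volume_Ioc (by linarith),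
      variance_cond_volume_Ico_neg_union_Ioc h1.le h2]
    nlinarith [mul_pos h1 (h1.trans h2)]

theorem stmt_13 (L γ c₁ c₂ β₁ β₂ : ℝ) (hL : 0 < L) (hγ : 0 < γ)
    (hc₁ : 0 ≤ c₁) (hc₂ : 0 ≤ c₂)
    (h1 : 0 < β₁) (h2 : β₁ < β₂) (h3 : 2*β₂ - β₁ ≤ L) :
    schedCost ((ENNReal.ofReal (2*L))⁻¹ • volume.restrict (Set.Icc (-L) L)) γ c₁ c₂
        (Set.Icc (-β₁) β₁)
        (Set.Ioc β₁ (2*β₂ - β₁))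
        (Set.Ico (-L) (-β₁) ∪ Set.Ioc (2*β₂ - β₁) L)
      <
    schedCost ((ENNReal.ofReal (2*L))⁻¹ • volume.restrict (Set.Icc (-L) L)) γ c₁ c₂
        (Set.Icc (-β₁) β₁)
        (Set.Ico (-β₂) (-β₁) ∪ Set.Ioc β₁ β₂)
        (Set.Ico (-L) (-β₂) ∪ Set.Ioc β₂ L) :=
  stmt_13_general L γ c₁ c₂ β₁ β₂ hL hγ h1 h2 h3
end
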